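/- Fix integers m, d ≥ 1 and α ∈ (0,1]. Let X be the set of continuous maps f : ℝ^m → ℝ^d such that [f]_{α,K} < ∞ for every compact set K ⊆ ℝ^m. Then X, endowed with the weak α-Hölder–Whitney topology, is a Baire space. -/

import Mathlib

open TopologicalSpace Set
open scoped ENNReal

noncomputable section

/-- Euclidean space `ℝ^n`. -/
abbrev Euc (n : ℕ) : Type := EuclideanSpace ℝ (Fin n)

/-- The `α`-Hölder seminorm of `f` over the set `A`, valued in `[0,∞]`:
`[f]_{α,A} = sup { ‖f x − f y‖ / ‖x − y‖^α : x, y ∈ A, x ≠ y }`. -/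
noncomputable def holderSemi {E F : Type*} [NormedAddCommGroup E] [NormedAddCommGroup F]
    (α : ℝ) (A : Set E) (f : E → F) : ℝ≥0∞ :=
  ⨆ (x) (_ : x ∈ A) (y) (_ : y ∈ A) (_ : x ≠ y),
    ENNReal.ofReal (‖f x - f y‖ / ‖x - y‖ ^ α)

/-- The sup-norm `‖f‖_{C⁰(A)} = sup_{x ∈ A} ‖f x‖`, valued in `[0,∞]`. -/
noncomputable def supNormOn {E F : Type*} [NormedAddCommGroup E] [NormedAddCommGroup F]
    (A : Set E) (f : E → F) : ℝ≥0∞ :=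
  ⨆ (x) (_ : x ∈ A), ENNReal.ofReal ‖f x‖

/-- The `α`-Hölder norm `‖f‖_{α,A} = ‖f‖_{C⁰(A)} + [f]_{α,A}`. -/
noncomputable def holderNorm {E F : Type*} [NormedAddCommGroup E] [NormedAddCommGroup F]
    (α : ℝ) (A : Set E) (f : E → F) : ℝ≥0∞ :=
  supNormOn A f + holderSemi α A f

/-- Continuous maps `ℝ^m → ℝ^d` with finite `α`-Hölder seminorm on every compact set. -/
abbrev HolderMap (m d : ℕ) (α : ℝ) : Type :=
  {f : Euc m → Euc d // Continuous f ∧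
    ∀ K : Set (Euc m), IsCompact K → holderSemi α K f < ⊤}

/-- Generating sets `N_s(f; {K_t}, {ε_t})` of the strong `α`-Hölder–Whitney topology:
indexed by a locally finite family of compact sets `K_t` and extended positive reals `ε_t`. -/
def strongBasic (m d : ℕ) (α : ℝ) : Set (Set (HolderMap m d α)) :=
  { S | ∃ (T : Type) (K : T → Set (Euc m)) (ε : T → ℝ≥0∞) (f : HolderMap m d α),
      (∀ t, IsCompact (K t)) ∧ LocallyFinite K ∧ (∀ t, 0 < ε t) ∧
      S = { g | ∀ t, holderNorm α (K t) (f.1 - g.1) < ε t } }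

/-- Generating sets `N(f; K, ε)` of the weak `α`-Hölder–Whitney topology. -/
def weakBasic (m d : ℕ) (α : ℝ) : Set (Set (HolderMap m d α)) :=
  { S | ∃ (f : HolderMap m d α) (K : Set (Euc m)) (ε : ℝ), IsCompact K ∧ 0 < ε ∧
      S = { g | holderNorm α K (f.1 - g.1) < ENNReal.ofReal ε } }

/-! Each norm `‖·‖_{α,K}` is dominated by `‖·‖_{α,B_n}` for a ball `B_n = closedBall 0 n ⊇ K`, so
the weak topology is that of the single pseudo-emetric `sup_n min (2⁻ⁿ, ‖u - v‖_{α,B_n})`. This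
pseudo-emetric is complete: a Cauchy sequence converges pointwise, locally uniformly (so the limit
is continuous), and in every `‖·‖_{α,B_n}` by lower semicontinuity of these norms under pointwise
limits. A complete pseudo-emetric space is a Baire space. -/

open Filter Metric Topology

section HolderNorm

variable {E F : Type*} [NormedAddCommGroup E] [NormedAddCommGroup F] {α : ℝ}
  {A B : Set E} {f g : E → F}

theorem le_holderSemi {x y : E} (hx : x ∈ A) (hy : y ∈ A) (hxy : x ≠ y) :
    ENNReal.ofReal (‖f x - f y‖ / ‖x - y‖ ^ α) ≤ holderSemi α A f :=
  le_iSup_of_le x <| le_iSup_of_le hx <| le_iSup_of_le y <| le_iSup_of_le hy <|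
    le_iSup_of_le hxy le_rfl

theorem le_supNormOn {x : E} (hx : x ∈ A) : ENNReal.ofReal ‖f x‖ ≤ supNormOn A f :=
  le_iSup_of_le x <| le_iSup_of_le hx le_rfl

theorem holderSemi_le_iff {c : ℝ≥0∞} :
    holderSemi α A f ≤ c ↔
      ∀ x ∈ A, ∀ y ∈ A, x ≠ y → ENNReal.ofReal (‖f x - f y‖ / ‖x - y‖ ^ α) ≤ c := by
  simp [holderSemi]

theorem supNormOn_le_iff {c : ℝ≥0∞} :
    supNormOn A f ≤ c ↔ ∀ x ∈ A, ENNReal.ofReal ‖f x‖ ≤ c := by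
  simp [supNormOn]

theorem holderNorm_mono (hAB : A ⊆ B) : holderNorm α A f ≤ holderNorm α B f :=
  add_le_add (supNormOn_le_iff.2 fun _ hx => le_supNormOn (hAB hx))
    (holderSemi_le_iff.2 fun _ hx _ hy hxy => le_holderSemi (hAB hx) (hAB hy) hxy)

theorem supNormOn_le_holderNorm : supNormOn A f ≤ holderNorm α A f :=
  le_add_of_nonneg_right zero_le

theorem holderSemi_le_holderNorm : holderSemi α A f ≤ holderNorm α A f :=
  le_add_of_nonneg_left zero_le

theorem ofReal_norm_le_holderNorm {x : E} (hx : x ∈ A) :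
    ENNReal.ofReal ‖f x‖ ≤ holderNorm α A f :=
  (le_supNormOn hx).trans supNormOn_le_holderNorm

@[simp]
theorem holderNorm_zero : holderNorm α A (0 : E → F) = 0 := by
  simp [holderNorm, supNormOn, holderSemi]

theorem supNormOn_add_le : supNormOn A (f + g) ≤ supNormOn A f + supNormOn A g := by
  refine supNormOn_le_iff.2 fun x hx => ?_
  calc ENNReal.ofReal ‖f x + g x‖ ≤ ENNReal.ofReal (‖f x‖ + ‖g x‖) :=
        ENNReal.ofReal_le_ofReal (norm_add_le _ _)
    _ ≤ ENNReal.ofReal ‖f x‖ + ENNReal.ofReal ‖g x‖ := ENNReal.ofReal_add_le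
    _ ≤ _ := add_le_add (le_supNormOn hx) (le_supNormOn hx)

theorem holderSemi_add_le : holderSemi α A (f + g) ≤ holderSemi α A f + holderSemi α A g := by
  refine holderSemi_le_iff.2 fun x hx y hy hxy => ?_
  calc ENNReal.ofReal (‖(f + g) x - (f + g) y‖ / ‖x - y‖ ^ α)
      ≤ ENNReal.ofReal (‖f x - f y‖ / ‖x - y‖ ^ α + ‖g x - g y‖ / ‖x - y‖ ^ α) := by
        rw [← add_div, Pi.add_apply, Pi.add_apply, add_sub_add_comm]
        gcongr
        exact norm_add_le _ _
    _ ≤ _ := ENNReal.ofReal_add_le.trans (add_le_add (le_holderSemi hx hy hxy)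
        (le_holderSemi hx hy hxy))

theorem holderNorm_add_le : holderNorm α A (f + g) ≤ holderNorm α A f + holderNorm α A g :=
  (add_le_add supNormOn_add_le holderSemi_add_le).trans_eq (add_add_add_comm _ _ _ _)

theorem holderNorm_sub_comm : holderNorm α A (f - g) = holderNorm α A (g - f) := by
  have hneg : ∀ x y, f x - g x - (f y - g y) = -(g x - f x - (g y - f y)) := fun _ _ => by abel
  simp only [holderNorm, supNormOn, holderSemi, Pi.sub_apply, norm_sub_rev (f _), hneg, norm_neg]

variable {ι : Type*} {l : Filter ι} {u : ι → E → F} {c : ℝ≥0∞}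

theorem supNormOn_le_of_tendsto [l.NeBot] (hu : ∀ x ∈ A, Tendsto (u · x) l (𝓝 (f x)))
    (hc : ∀ᶠ i in l, supNormOn A (u i) ≤ c) : supNormOn A f ≤ c :=
  supNormOn_le_iff.2 fun x hx =>
    le_of_tendsto (ENNReal.tendsto_ofReal (hu x hx).norm)
      (hc.mono fun _ hi => (le_supNormOn hx).trans hi)

theorem holderSemi_le_of_tendsto [l.NeBot] (hu : ∀ x ∈ A, Tendsto (u · x) l (𝓝 (f x)))
    (hc : ∀ᶠ i in l, holderSemi α A (u i) ≤ c) : holderSemi α A f ≤ c :=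
  holderSemi_le_iff.2 fun x hx y hy hxy =>
    le_of_tendsto (ENNReal.tendsto_ofReal (((hu x hx).sub (hu y hy)).norm.div_const _))
      (hc.mono fun _ hi => (le_holderSemi hx hy hxy).trans hi)

theorem holderNorm_le_of_tendsto [l.NeBot] (hu : ∀ x ∈ A, Tendsto (u · x) l (𝓝 (f x)))
    (hc : ∀ᶠ i in l, holderNorm α A (u i) ≤ c) : holderNorm α A f ≤ 2 * c :=
  (add_le_add (supNormOn_le_of_tendsto hu (hc.mono fun _ hi => supNormOn_le_holderNorm.trans hi))
    (holderSemi_le_of_tendsto hu (hc.mono fun _ hi => holderSemi_le_holderNorm.trans hi))).trans_eq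
    (two_mul c).symm

theorem tendstoUniformlyOn_of_tendsto_holderNorm
    (h : Tendsto (fun i => holderNorm α A (f - u i)) l (𝓝 0)) : TendstoUniformlyOn u f l A :=
  EMetric.tendstoUniformlyOn_iff.2 fun ε hε =>
    (h.eventually (gt_mem_nhds hε)).mono fun _ hi x hx => by
      rw [edist_dist, dist_eq_norm]
      exact (ofReal_norm_le_holderNorm (f := f - u _) hx).trans_lt hi

theorem exists_tendsto_holderNorm_of_cauchy [CompleteSpace F] {u : ℕ → E → F}
    (hu : ∀ K : Set E, Bornology.IsBounded K → ∀ ε > 0, ∃ N, ∀ j ≥ N, ∀ k ≥ N,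
      holderNorm α K (u j - u k) < ε) :
    ∃ f : E → F, ∀ K : Set E, Bornology.IsBounded K →
      Tendsto (fun k => holderNorm α K (f - u k)) atTop (𝓝 0) := by
  have hpointwise (x : E) : CauchySeq (u · x) := by
    refine EMetric.cauchySeq_iff.2 fun ε hε => ?_
    obtain ⟨N, hN⟩ := hu {x} Bornology.isBounded_singleton ε hε
    refine ⟨N, fun j hj k hk => ?_⟩
    rw [edist_dist, dist_eq_norm]
    exact (ofReal_norm_le_holderNorm (f := u j - u k) (Set.mem_singleton x)).trans_lt
      (hN j hj k hk)
  choose f hf using fun x => cauchySeq_tendsto_of_complete (hpointwise x)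
  refine ⟨f, fun K hK => ENNReal.tendsto_nhds_zero.2 fun ε hε => ?_⟩
  obtain ⟨N, hN⟩ := hu K hK (ε / 2) (ENNReal.half_pos hε.ne')
  refine eventually_atTop.2 ⟨N, fun k hk => ?_⟩
  calc holderNorm α K (f - u k) ≤ 2 * (ε / 2) :=
        holderNorm_le_of_tendsto (fun x _ => (hf x).sub_const _)
          (eventually_atTop.2 ⟨N, fun j hj => (hN j hj k hk).le⟩)
    _ = ε := ENNReal.mul_div_cancel two_ne_zero ENNReal.ofNat_ne_top

end HolderNorm

theorem min_le_min_add_min {M : Type*} [AddCommMonoid M] [LinearOrder M] [CanonicallyOrderedAdd M]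
    {a b b' c : M} (h : a ≤ b + b') : min c a ≤ min c b + min c b' := by
  rcases le_total c b with hb | hb
  · exact (min_le_left _ _).trans ((min_eq_left hb).ge.trans le_self_add)
  rcases le_total c b' with hb' | hb'
  · exact (min_le_left _ _).trans ((min_eq_left hb').ge.trans le_add_self)
  · rw [min_eq_right hb, min_eq_right hb']
    exact (min_le_right _ _).trans h

section HolderEDist

variable {E F : Type*} [NormedAddCommGroup E] [NormedAddCommGroup F] (α : ℝ)

def holderEDist (f g : E → F) : ℝ≥0∞ :=
  ⨆ n : ℕ, min (2⁻¹ ^ n) (holderNorm α (closedBall 0 n) (f - g))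

variable {α}

theorem min_le_holderEDist (f g : E → F) (n : ℕ) :
    min (2⁻¹ ^ n) (holderNorm α (closedBall 0 n) (f - g)) ≤ holderEDist α f g :=
  le_iSup (fun k : ℕ => min (2⁻¹ ^ k) (holderNorm α (closedBall 0 k) (f - g))) n

theorem holderEDist_self (f : E → F) : holderEDist α f f = 0 := by
  simp [holderEDist]

theorem holderEDist_comm (f g : E → F) : holderEDist α f g = holderEDist α g f := by
  simp only [holderEDist, holderNorm_sub_comm (f := f)]

theorem holderEDist_triangle (f g h : E → F) :
    holderEDist α f h ≤ holderEDist α f g + holderEDist α g h := by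
  refine iSup_le fun n => ?_
  have hle := holderNorm_add_le (α := α) (A := closedBall 0 n) (f := f - g) (g := g - h)
  rw [sub_add_sub_cancel] at hle
  exact (min_le_min_add_min hle).trans
    (add_le_add (min_le_holderEDist f g n) (min_le_holderEDist g h n))

theorem holderEDist_le {f g : E → F} {c : ℝ≥0∞} (n : ℕ) (hn : 2⁻¹ ^ n ≤ c)
    (h : holderNorm α (closedBall 0 n) (f - g) ≤ c) : holderEDist α f g ≤ c := by
  refine iSup_le fun k => ?_
  rcases le_total k n with hk | hk
  · exact (min_le_right _ _).trans <| (holderNorm_mono <| closedBall_subset_closedBall <|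
      by exact_mod_cast hk).trans h
  · exact (min_le_left _ _).trans <| (pow_le_pow_right_of_le_one' (by simp) hk).trans hn

theorem exists_pos_holderNorm_le_holderEDist {K : Set E} (hK : Bornology.IsBounded K) :
    ∃ r > 0, ∀ f g : E → F, holderEDist α f g < r →
      holderNorm α K (f - g) ≤ holderEDist α f g := by
  obtain ⟨n, hn⟩ : ∃ n : ℕ, K ⊆ closedBall 0 n := by
    obtain ⟨R, hR⟩ := hK.subset_closedBall 0
    exact ⟨⌈R⌉₊, hR.trans (closedBall_subset_closedBall (Nat.le_ceil R))⟩
  refine ⟨2⁻¹ ^ n, ENNReal.pow_pos (by simp) n, fun f g hfg => (holderNorm_mono hn).trans ?_⟩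
  have hlt : holderNorm α (closedBall 0 n) (f - g) < 2⁻¹ ^ n :=
    (min_lt_iff.1 ((min_le_holderEDist f g n).trans_lt hfg)).resolve_left (lt_irrefl _)
  exact (min_eq_right hlt.le).symm.trans_le (min_le_holderEDist f g n)

theorem tendsto_holderEDist_of_tendsto_holderNorm {ι : Type*} {l : Filter ι} {f : E → F}
    {u : ι → E → F}
    (h : ∀ n : ℕ, Tendsto (fun i => holderNorm α (closedBall 0 n) (f - u i)) l (𝓝 0)) :
    Tendsto (fun i => holderEDist α f (u i)) l (𝓝 0) :=
  ENNReal.tendsto_nhds_zero.2 fun ε hε => by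
    obtain ⟨n, hn⟩ := ENNReal.exists_inv_two_pow_lt hε.ne'
    exact (ENNReal.tendsto_nhds_zero.1 (h n) _ (ENNReal.pow_pos (by simp) n)).mono fun i hi =>
      holderEDist_le n hn.le (hi.trans hn.le)

end HolderEDist

section HolderMap

variable {m d : ℕ} {α : ℝ}

variable (m d α) in
abbrev holderEMetric : PseudoEMetricSpace (HolderMap m d α) where
  edist u v := holderEDist α u.1 v.1
  edist_self u := holderEDist_self u.1
  edist_comm u v := holderEDist_comm u.1 v.1
  edist_triangle u v w := holderEDist_triangle u.1 v.1 w.1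

theorem isOpen_of_mem_weakBasic {S : Set (HolderMap m d α)} (hS : S ∈ weakBasic m d α) :
    IsOpen[(holderEMetric m d α).toUniformSpace.toTopologicalSpace] S := by
  let _ := holderEMetric m d α
  obtain ⟨f, K, ε, hK, -, rfl⟩ := hS
  obtain ⟨r, hr, hKr⟩ := exists_pos_holderNorm_le_holderEDist (F := Euc d) (α := α) hK.isBounded
  refine EMetric.isOpen_iff.2 fun g (hg : holderNorm α K (f.1 - g.1) < ENNReal.ofReal ε) => ?_
  refine ⟨min r (ENNReal.ofReal ε - holderNorm α K (f.1 - g.1)), lt_min hr (tsub_pos_of_lt hg),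
    fun h hh => ?_⟩
  have hgh : holderNorm α K (g.1 - h.1) < ENNReal.ofReal ε - holderNorm α K (f.1 - g.1) := by
    rw [holderNorm_sub_comm]
    exact (hKr h.1 g.1 (hh.trans_le (min_le_left _ _))).trans_lt (hh.trans_le (min_le_right _ _))
  calc holderNorm α K (f.1 - h.1)
      ≤ holderNorm α K (f.1 - g.1) + holderNorm α K (g.1 - h.1) := by
        simpa using holderNorm_add_le (α := α) (A := K) (f := f.1 - g.1) (g := g.1 - h.1)
    _ < holderNorm α K (f.1 - g.1) + (ENNReal.ofReal ε - holderNorm α K (f.1 - g.1)) :=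
        ENNReal.add_lt_add_left hg.ne_top hgh
    _ = ENNReal.ofReal ε := add_tsub_cancel_of_le hg.le

theorem exists_mem_weakBasic_subset_holderEDist_lt (f : HolderMap m d α) {ε : ℝ≥0∞}
    (hε : 0 < ε) : ∃ S ∈ weakBasic m d α, f ∈ S ∧ S ⊆ {g | holderEDist α g.1 f.1 < ε} := by
  obtain ⟨n, hn⟩ := ENNReal.exists_inv_two_pow_lt hε.ne'
  have hradius : ENNReal.ofReal ((2 : ℝ)⁻¹ ^ n) = 2⁻¹ ^ n := by simp [ENNReal.inv_pow]
  refine ⟨_, ⟨f, closedBall 0 n, 2⁻¹ ^ n, isCompact_closedBall _ _, by positivity, rfl⟩, ?_,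
    fun g (hg : holderNorm α _ (f.1 - g.1) < _) => ?_⟩
  · simp
  · show holderEDist α g.1 f.1 < ε
    rw [holderEDist_comm]
    exact (holderEDist_le n le_rfl (hg.le.trans_eq hradius)).trans_lt hn

theorem generateFrom_weakBasic_eq :
    generateFrom (weakBasic m d α) = (holderEMetric m d α).toUniformSpace.toTopologicalSpace := by
  let _ := holderEMetric m d α
  refine le_antisymm (le_of_nhds_le_nhds fun f => Metric.nhds_basis_eball.ge_iff.2 fun ε hε => ?_)
    (le_generateFrom_iff_subset_isOpen.2 fun S hS => isOpen_of_mem_weakBasic hS)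
  obtain ⟨S, hS, hfS, hSε⟩ := exists_mem_weakBasic_subset_holderEDist_lt f hε
  rw [nhds_generateFrom]
  exact mem_iInf_of_mem S (mem_iInf_of_mem ⟨hfS, hS⟩ (mem_principal.2 hSε))

theorem completeSpace_holderEMetric :
    @CompleteSpace (HolderMap m d α) (holderEMetric m d α).toUniformSpace := by
  let _ := holderEMetric m d α
  refine EMetric.complete_of_cauchySeq_tendsto fun u hu => ?_
  obtain ⟨f, hf⟩ := exists_tendsto_holderNorm_of_cauchy (α := α) (u := fun k => (u k).1)
    fun K hK ε hε => by
      obtain ⟨r, hr, hKr⟩ := exists_pos_holderNorm_le_holderEDist (F := Euc d) (α := α) hK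
      obtain ⟨N, hN⟩ := EMetric.cauchySeq_iff.1 hu (min ε r) (lt_min hε hr)
      refine ⟨N, fun j hj k hk => ?_⟩
      have h := hN j hj k hk
      exact (hKr _ _ (h.trans_le (min_le_right _ _))).trans_lt (h.trans_le (min_le_left _ _))
  have hcont : Continuous f :=
    (tendstoLocallyUniformly_iff_forall_isCompact.2 fun K hK =>
      tendstoUniformlyOn_of_tendsto_holderNorm (hf K hK.isBounded)).continuous
      (Frequently.of_forall fun k => (u k).2.1)
  have hfinite (K : Set (Euc m)) (hK : IsCompact K) : holderSemi α K f < ⊤ := by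
    obtain ⟨k, hk⟩ := ((hf K hK.isBounded).eventually (gt_mem_nhds one_pos)).exists
    calc holderSemi α K f ≤ holderSemi α K (f - (u k).1) + holderSemi α K (u k).1 := by
          simpa using holderSemi_add_le (α := α) (A := K) (f := f - (u k).1) (g := (u k).1)
      _ < ⊤ := ENNReal.add_lt_top.2
          ⟨holderSemi_le_holderNorm.trans_lt (hk.trans ENNReal.one_lt_top), (u k).2.2 K hK⟩
  refine ⟨⟨f, hcont, hfinite⟩, tendsto_iff_edist_tendsto_0.2 ?_⟩
  exact (tendsto_holderEDist_of_tendsto_holderNorm fun n => hf _ isBounded_closedBall).congr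
    fun k => holderEDist_comm _ _

end HolderMap

theorem statement1_general (m d : ℕ) (α : ℝ) :
    @BaireSpace (HolderMap m d α) (generateFrom (weakBasic m d α)) := by
  rw [generateFrom_weakBasic_eq]
  let E := holderEMetric m d α
  exact @BaireSpace.of_completelyPseudoMetrizable _ E.toUniformSpace.toTopologicalSpace
    (@IsCompletelyPseudoMetrizableSpace.of_completeSpace_pseudometrizable _ E.toUniformSpace
      completeSpace_holderEMetric (@EMetric.instIsCountablyGeneratedUniformity _ E))

/-- the space of continuous maps `ℝ^m → ℝ^d` with locally finite `α`-Hölder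
seminorm, endowed with the weak `α`-Hölder–Whitney topology, is a Baire space. -/
theorem statement1 (m d : ℕ) (hm : 1 ≤ m) (hd : 1 ≤ d) (α : ℝ) (hα : α ∈ Set.Ioc (0:ℝ) 1) :
    @BaireSpace (HolderMap m d α) (generateFrom (weakBasic m d α)) :=
  statement1_general m d α
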